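/- For all n ≥ 1, |T_n| = |S_n| − Σ_{i=1}^{n-1} |T_i| · |S_{n-i}|, where T_m is the set of strong score sequences of length m and S_m the set of score sequences of length m. -/

import Mathlib

/-- A score sequence: nondecreasing, entries in `[0, n-1]`, prefix sums at least
`binom k 2`, and total sum `binom n 2`. -/
def IsScoreSeq (s : List ℕ) : Prop :=
  s.Pairwise (· ≤ ·) ∧ (∀ x ∈ s, x < s.length) ∧
    (∀ k, 0 < k → k < s.length → k.choose 2 ≤ (s.take k).sum) ∧
    s.sum = s.length.choose 2

/-- A strong score sequence: nonempty and all proper prefix-sum inequalities strict. -/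
def IsStrongScoreSeq (s : List ℕ) : Prop :=
  IsScoreSeq s ∧ s ≠ [] ∧ ∀ k, 0 < k → k < s.length → k.choose 2 < (s.take k).sum

/-- Direct sum of score sequences: concatenate `u` with `v` shifted up by `u.length`. -/
def dsum (u v : List ℕ) : List ℕ := u ++ v.map (· + u.length)

/-- Iterated direct sum of a list of score sequences. -/
def dsumAll (ts : List (List ℕ)) : List ℕ := ts.foldl dsum []

/-- `s + j`: entries shifted by `j`, reduced modulo the length, sorted nondecreasingly. -/
def shift (s : List ℕ) (j : ℕ) : List ℕ :=
  Multiset.sort ((s.map fun x => (x + j) % s.length : List ℕ) : Multiset ℕ) (· ≤ ·)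


/-- The number of score sequences of length `m`. -/
noncomputable def scoreCard (m : ℕ) : ℕ := Nat.card {s : List ℕ // IsScoreSeq s ∧ s.length = m}

/-- The number of strong score sequences of length `m`. -/
noncomputable def strongCard (m : ℕ) : ℕ := Nat.card {s : List ℕ // IsStrongScoreSeq s ∧ s.length = m}

/-!
The prefix excess `e_s(j) = s_0 + ⋯ + s_{j-1} - C(j,2)` is nonnegative on a score sequence
and vanishes at its length, and it is additive under `⊕`:
`e_{u ⊕ t}(|u| + i) = e_u(|u|) + e_t(i)`. Hence the proper zeros of the excess of `u ⊕ t`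
(with `t` strong) are exactly those of `u`, and cutting a nonempty score sequence `s` at the
last zero `k < |s|` of `e_s` writes it uniquely as `u ⊕ t` with `u` a score sequence and `t`
strong. Thus `S_n ≃ Σ_{1 ≤ i ≤ n} T_i × S_{n-i}` for `n ≥ 1`, and the recursion isolates the
term `i = n` (note `S_0 = {[]}`).
-/

open Finset

lemma Nat.choose_two_add (a b : ℕ) : (a + b).choose 2 = a.choose 2 + a * b + b.choose 2 := by
  apply Nat.cast_injective (R := ℚ)
  push_cast [Nat.cast_choose_two]
  ring

def prefixExcess (s : List ℕ) (k : ℕ) : ℤ := (s.take k).sum - k.choose 2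

lemma prefixExcess_zero (s : List ℕ) : prefixExcess s 0 = 0 := by
  simp [prefixExcess]

lemma prefixExcess_succ {s : List ℕ} {j : ℕ} (hj : j < s.length) :
    prefixExcess s (j + 1) = prefixExcess s j + s[j] - j := by
  simp only [prefixExcess, List.sum_take_succ _ _ hj, Nat.choose_succ_succ', Nat.choose_one_right]
  push_cast
  ring

lemma prefixExcess_take {s : List ℕ} {j k : ℕ} (hjk : j ≤ k) :
    prefixExcess (s.take k) j = prefixExcess s j := by
  simp [prefixExcess, List.take_take, min_eq_left hjk]

lemma isScoreSeq_iff_prefixExcess {s : List ℕ} :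
    IsScoreSeq s ↔ s.Pairwise (· ≤ ·) ∧ (∀ x ∈ s, x < s.length) ∧
      (∀ k ≤ s.length, 0 ≤ prefixExcess s k) ∧ prefixExcess s s.length = 0 := by
  simp only [IsScoreSeq, prefixExcess, sub_nonneg, sub_eq_zero, Nat.cast_le, List.take_length,
    Nat.cast_inj]
  refine and_congr_right fun _ => and_congr_right fun _ =>
    ⟨fun ⟨hp, ht⟩ => ⟨fun k hk => ?_, ht⟩, fun ⟨hp, ht⟩ => ⟨fun k _ hk => hp k hk.le, ht⟩⟩
  rcases hk.lt_or_eq with hk | rfl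
  · rcases k.eq_zero_or_pos with rfl | hk0
    · simp
    · exact hp k hk0 hk
  · simp [ht]

lemma isStrongScoreSeq_iff_prefixExcess {s : List ℕ} :
    IsStrongScoreSeq s ↔
      IsScoreSeq s ∧ s ≠ [] ∧ ∀ k, 0 < k → k < s.length → 0 < prefixExcess s k := by
  simp only [IsStrongScoreSeq, prefixExcess, sub_pos, Nat.cast_lt]

lemma IsScoreSeq.prefixExcess_nonneg {s : List ℕ} (hs : IsScoreSeq s) {k : ℕ}
    (hk : k ≤ s.length) : 0 ≤ prefixExcess s k :=
  (isScoreSeq_iff_prefixExcess.mp hs).2.2.1 k hk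

lemma IsScoreSeq.prefixExcess_length {s : List ℕ} (hs : IsScoreSeq s) :
    prefixExcess s s.length = 0 :=
  (isScoreSeq_iff_prefixExcess.mp hs).2.2.2

lemma length_dsum (u t : List ℕ) : (dsum u t).length = u.length + t.length := by
  simp [dsum]

lemma prefixExcess_dsum_of_le {u t : List ℕ} {j : ℕ} (hj : j ≤ u.length) :
    prefixExcess (dsum u t) j = prefixExcess u j := by
  simp [prefixExcess, dsum, List.take_append_of_le_length hj]

lemma sum_take_dsum_length_add {u t : List ℕ} {i : ℕ} (hi : i ≤ t.length) :
    ((dsum u t).take (u.length + i)).sum = u.sum + (t.take i).sum + i * u.length := by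
  simp [dsum, List.take_append, ← List.map_take, List.sum_map_add, hi, List.take_of_length_le,
    add_assoc]

lemma prefixExcess_dsum_length_add {u t : List ℕ} {i : ℕ} (hi : i ≤ t.length) :
    prefixExcess (dsum u t) (u.length + i) = prefixExcess u u.length + prefixExcess t i := by
  simp only [prefixExcess, sum_take_dsum_length_add hi, List.take_length, Nat.choose_two_add]
  push_cast
  ring

lemma isScoreSeq_dsum {u t : List ℕ} (hu : IsScoreSeq u) (ht : IsScoreSeq t) :
    IsScoreSeq (dsum u t) := by
  rw [isScoreSeq_iff_prefixExcess] at hu ht ⊢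
  obtain ⟨hus, hub, hue, hul⟩ := hu
  obtain ⟨hts, htb, hte, htl⟩ := ht
  rw [length_dsum]
  refine ⟨?_, ?_, fun k hk => ?_, ?_⟩
  · refine List.pairwise_append.mpr ⟨hus, List.pairwise_map.mpr (hts.imp (by omega)), ?_⟩
    simp only [List.mem_map]
    rintro x hx _ ⟨y, -, rfl⟩
    have := hub x hx
    omega
  · simp only [dsum, List.mem_append, List.mem_map]
    rintro _ (hx | ⟨y, hy, rfl⟩)
    · have := hub _ hx
      omega
    · have := htb y hy
      omega
  · rcases le_or_gt k u.length with hku | hku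
    · rw [prefixExcess_dsum_of_le hku]
      exact hue k hku
    · obtain ⟨i, rfl⟩ := Nat.exists_eq_add_of_le hku.le
      rw [prefixExcess_dsum_length_add (by omega), hul, zero_add]
      exact hte i (by omega)
  · rw [prefixExcess_dsum_length_add le_rfl, hul, htl, add_zero]

lemma prefixExcess_dsum_pos {u t : List ℕ} (hu : IsScoreSeq u) (ht : IsStrongScoreSeq t)
    {j : ℕ} (hj₁ : u.length < j) (hj₂ : j < u.length + t.length) :
    0 < prefixExcess (dsum u t) j := by
  obtain ⟨i, rfl⟩ := Nat.exists_eq_add_of_le hj₁.le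
  rw [prefixExcess_dsum_length_add (by omega), hu.prefixExcess_length, zero_add]
  exact (isStrongScoreSeq_iff_prefixExcess.mp ht).2.2 i (by omega) (by omega)

lemma length_le_of_dsum_eq {u t u' t' : List ℕ} (hu : IsScoreSeq u) (ht : t ≠ [])
    (hu' : IsScoreSeq u') (ht' : IsStrongScoreSeq t') (h : dsum u t = dsum u' t') :
    u.length ≤ u'.length := by
  by_contra! hlt
  have hlen := congrArg List.length h
  rw [length_dsum, length_dsum] at hlen
  have hpos := prefixExcess_dsum_pos hu' ht' hlt (by have := List.length_pos_iff.mpr ht; omega)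
  rw [← h, prefixExcess_dsum_of_le le_rfl, hu.prefixExcess_length] at hpos
  exact hpos.false

lemma dsum_inj {u t u' t' : List ℕ} (hu : IsScoreSeq u) (ht : IsStrongScoreSeq t)
    (hu' : IsScoreSeq u') (ht' : IsStrongScoreSeq t') :
    dsum u t = dsum u' t' ↔ u = u' ∧ t = t' := by
  refine ⟨fun h => ?_, by rintro ⟨rfl, rfl⟩; rfl⟩
  have hlen := (length_le_of_dsum_eq hu ht.2.1 hu' ht' h).antisymm
    (length_le_of_dsum_eq hu' ht'.2.1 hu ht h.symm)
  obtain ⟨rfl, hmap⟩ := List.append_inj h hlen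
  exact ⟨rfl, List.map_injective_iff.mpr (add_left_injective _) hmap⟩

lemma dsum_take_map_drop_sub {s : List ℕ} {k : ℕ} (hk : k ≤ s.length)
    (h : ∀ x ∈ s.drop k, k ≤ x) : dsum (s.take k) ((s.drop k).map (· - k)) = s := by
  conv_rhs => rw [← List.take_append_drop k s]
  rw [dsum, List.map_map, List.length_take_of_le hk]
  congr 1
  exact (List.map_congr_left fun x hx => Nat.sub_add_cancel (h x hx)).trans (List.map_id _)

lemma IsScoreSeq.le_of_mem_drop {s : List ℕ} (hs : IsScoreSeq s) {k : ℕ} (hk : k < s.length)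
    (h0 : prefixExcess s k = 0) : ∀ x ∈ s.drop k, k ≤ x := by
  have hsk : k ≤ s[k] := by
    have := hs.prefixExcess_nonneg (k := k + 1) hk
    rw [prefixExcess_succ hk, h0] at this
    omega
  have hsorted := hs.1.sublist (List.drop_sublist k s)
  rw [List.drop_eq_getElem_cons hk, List.pairwise_cons] at hsorted
  rw [List.drop_eq_getElem_cons hk]
  simp only [List.mem_cons, forall_eq_or_imp]
  exact ⟨hsk, fun x hx => hsk.trans (hsorted.1 x hx)⟩

lemma IsScoreSeq.lt_of_mem_take {s : List ℕ} (hs : IsScoreSeq s) {k : ℕ} (hk : k ≤ s.length)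
    (h0 : prefixExcess s k = 0) : ∀ x ∈ s.take k, x < k := by
  rcases k with _ | j
  · simp
  have hsj : s[j] < j + 1 := by
    have := hs.prefixExcess_nonneg (k := j) (by omega)
    rw [prefixExcess_succ hk] at h0
    omega
  have hsorted := hs.1.sublist (List.take_sublist (j + 1) s)
  rw [List.take_add_one, List.getElem?_eq_getElem hk, Option.toList_some,
    List.pairwise_append] at hsorted
  rw [List.take_add_one, List.getElem?_eq_getElem hk, Option.toList_some]
  simp only [List.mem_append, List.mem_singleton]
  rintro x (hx | rfl)
  · exact (hsorted.2.2 x hx _ (List.mem_singleton_self _)).trans_lt hsj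
  · exact hsj

lemma IsScoreSeq.take_of_prefixExcess_eq_zero {s : List ℕ} (hs : IsScoreSeq s) {k : ℕ}
    (hk : k ≤ s.length) (h0 : prefixExcess s k = 0) : IsScoreSeq (s.take k) := by
  rw [isScoreSeq_iff_prefixExcess, List.length_take_of_le hk]
  refine ⟨hs.1.sublist (List.take_sublist k s), hs.lt_of_mem_take hk h0, fun j hj => ?_, ?_⟩
  · rw [prefixExcess_take hj]
    exact hs.prefixExcess_nonneg (hj.trans hk)
  · rw [prefixExcess_take le_rfl, h0]

lemma IsScoreSeq.of_dsum_right {u t : List ℕ} (h : IsScoreSeq (dsum u t)) (hu : IsScoreSeq u) :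
    IsScoreSeq t := by
  have hexc : ∀ i ≤ t.length, prefixExcess t i = prefixExcess (dsum u t) (u.length + i) :=
    fun i hi => by rw [prefixExcess_dsum_length_add hi, hu.prefixExcess_length, zero_add]
  rw [isScoreSeq_iff_prefixExcess] at h ⊢
  obtain ⟨hs, hb, he, hl⟩ := h
  rw [length_dsum] at hb he hl
  refine ⟨(List.pairwise_map.mp (List.pairwise_append.mp hs).2.1).imp (by omega),
    fun x hx => ?_, fun i hi => ?_, ?_⟩
  · have := hb (x + u.length) (List.mem_append_right _ (List.mem_map_of_mem hx))
    omega
  · rw [hexc i hi]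
    exact he _ (by omega)
  · rw [hexc _ le_rfl, hl]

lemma IsScoreSeq.exists_dsum {s : List ℕ} (hs : IsScoreSeq s) (hne : s ≠ []) :
    ∃ u t, IsScoreSeq u ∧ IsStrongScoreSeq t ∧ dsum u t = s := by
  classical
  set k := Nat.findGreatest (fun j => prefixExcess s j = 0) (s.length - 1)
  have hk0 : prefixExcess s k = 0 :=
    Nat.findGreatest_spec (P := fun j => prefixExcess s j = 0) (Nat.zero_le _) (prefixExcess_zero s)
  have hklt : k < s.length := (Nat.findGreatest_le _).trans_lt
    (Nat.sub_one_lt (List.length_pos_iff.mpr hne).ne')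
  have hpos : ∀ j, k < j → j < s.length → 0 < prefixExcess s j := fun j hkj hj =>
    (hs.prefixExcess_nonneg hj.le).lt_of_ne (Ne.symm (Nat.findGreatest_is_greatest hkj (by omega)))
  have hu := hs.take_of_prefixExcess_eq_zero hklt.le hk0
  have htlen : ((s.drop k).map (· - k)).length = s.length - k := by simp
  have hsplit := dsum_take_map_drop_sub hklt.le (hs.le_of_mem_drop hklt hk0)
  refine ⟨_, _, hu, isStrongScoreSeq_iff_prefixExcess.mpr
    ⟨(hsplit ▸ hs).of_dsum_right hu, ?_, fun i hi hit => ?_⟩, hsplit⟩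
  · exact List.ne_nil_of_length_pos (by omega)
  · have := prefixExcess_dsum_length_add (u := s.take k) hit.le
    rw [hsplit, hu.prefixExcess_length, zero_add, List.length_take_of_le hklt.le] at this
    rw [← this]
    exact hpos _ (by omega) (by omega)

abbrev ScoreSeqs (m : ℕ) := {s : List ℕ // IsScoreSeq s ∧ s.length = m}

abbrev StrongScoreSeqs (m : ℕ) := {s : List ℕ // IsStrongScoreSeq s ∧ s.length = m}

instance (m : ℕ) : Finite (ScoreSeqs m) := by
  refine Set.Finite.to_subtype
    (((List.finite_length_eq (Fin m) m).image (List.map Fin.val)).subset ?_)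
  rintro s ⟨hs, hlen⟩
  have hbound : ∀ x ∈ s, x < m := hlen ▸ hs.2.1
  lift s to List (Fin m) using hbound
  exact ⟨s, by simpa using hlen, rfl⟩

instance (m : ℕ) : Finite (StrongScoreSeqs m) :=
  Finite.of_injective (fun s => (⟨s.1, s.2.1.1, s.2.2⟩ : ScoreSeqs m))
    fun _ _ h => Subtype.ext (Subtype.mk.inj h)

def dsumSigma (n : ℕ) :
    (Σ i : Icc 1 n, StrongScoreSeqs i × ScoreSeqs (n - i)) → ScoreSeqs n :=
  fun x => ⟨dsum x.2.2.1 x.2.1.1, isScoreSeq_dsum x.2.2.2.1 x.2.1.2.1.1, by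
    rw [length_dsum, x.2.2.2.2, x.2.1.2.2]
    have := (mem_Icc.mp x.1.2).2
    omega⟩

lemma dsumSigma_injective (n : ℕ) : Function.Injective (dsumSigma n) := by
  rintro ⟨⟨i, _⟩, ⟨t, ht, hti⟩, ⟨u, hu, _⟩⟩ ⟨⟨i', _⟩, ⟨t', ht', hti'⟩, ⟨u', hu', _⟩⟩ h
  obtain ⟨rfl, rfl⟩ := (dsum_inj hu ht hu' ht').mp (congrArg Subtype.val h)
  obtain rfl : i = i' := hti.symm.trans hti'
  rfl

lemma dsumSigma_surjective {n : ℕ} (hn : 0 < n) : Function.Surjective (dsumSigma n) := by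
  rintro ⟨s, hs, rfl⟩
  obtain ⟨u, t, hu, ht, rfl⟩ := hs.exists_dsum (List.length_pos_iff.mp hn)
  have htpos := List.length_pos_iff.mpr ht.2.1
  refine ⟨⟨⟨t.length, mem_Icc.mpr ⟨htpos, ?_⟩⟩, ⟨t, ht, rfl⟩, ⟨u, hu, ?_⟩⟩, rfl⟩
    <;> simp [length_dsum]

lemma scoreCard_eq_sum {n : ℕ} (hn : 0 < n) :
    scoreCard n = ∑ i ∈ Icc 1 n, strongCard i * scoreCard (n - i) := by
  rw [scoreCard,
    ← Nat.card_eq_of_bijective _ ⟨dsumSigma_injective n, dsumSigma_surjective hn⟩, Nat.card_sigma]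
  simp only [Nat.card_prod]
  exact sum_coe_sort (Icc 1 n) fun i => strongCard i * scoreCard (n - i)

lemma scoreCard_zero : scoreCard 0 = 1 :=
  Nat.card_eq_one_iff_unique.mpr ⟨⟨fun s s' => Subtype.ext <| by
    rw [List.length_eq_zero_iff.mp s.2.2, List.length_eq_zero_iff.mp s'.2.2]⟩,
    ⟨⟨[], by simp [IsScoreSeq], rfl⟩⟩⟩

/-- `|T_n| = |S_n| − ∑_{i=1}^{n-1} |T_i|·|S_{n-i}|`. -/
theorem strongCard_recursion (n : ℕ) (hn : 1 ≤ n) :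
    (strongCard n : ℤ) =
      (scoreCard n : ℤ) -
        ∑ i ∈ Finset.Icc 1 (n - 1), (strongCard i : ℤ) * (scoreCard (n - i) : ℤ) := by
  obtain ⟨m, rfl⟩ := Nat.exists_eq_add_of_le' hn
  rw [scoreCard_eq_sum m.succ_pos, sum_Icc_succ_top (by omega), Nat.add_sub_cancel, Nat.sub_self,
    scoreCard_zero]
  push_cast
  ring
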